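/- Let S and A be finite nonempty sets, P a Markov transition kernel, r : S → ℝ, 0 ≤ γ < 1, and k > 0. Let V_k be the unique fixed point of the g-soft Bellman operator and V* the unique fixed point of the exact Bellman optimality operator (with max over actions). Then for every state s, 0 ≤ V_k(s) − V*(s) ≤ log(|A|)/(k·(1−γ)). -/

import Mathlib

/-!
Let `D = V_k - V*`. The log-sum-exp of `k • Q` lies between `max Q` and `max Q + log |A| / k` for any `Q`,
while `qValue V_k - qValue V*` is `γ` times a `P`-average of `D`, hence lies between `γ * min D` and
`γ * max D`. With the two fixed-point equations this gives `γ * min D ≤ D ≤ γ * max D + log |A| / k`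
pointwise, and evaluating at a minimiser, resp. maximiser, of `D` yields `0 ≤ min D` and
`max D ≤ log |A| / (k * (1 - γ))`.
-/

open Real Finset

section LogSumExp

variable {ι : Type*} [Fintype ι] [Nonempty ι] {k : ℝ}

lemma sup'_le_inv_mul_log_sum_exp (f : ι → ℝ) (hk : 0 < k) :
    univ.sup' univ_nonempty f ≤ (1 / k) * log (∑ i, exp (k * f i)) := by
  refine sup'_le _ _ fun i _ => ?_
  rw [one_div, inv_mul_eq_div, le_div_iff₀ hk, mul_comm, le_log_iff_exp_le (by positivity)]
  exact single_le_sum (f := fun j => exp (k * f j)) (fun j _ => (exp_pos _).le) (mem_univ i)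

lemma inv_mul_log_sum_exp_le (f : ι → ℝ) (hk : 0 < k) :
    (1 / k) * log (∑ i, exp (k * f i)) ≤
      univ.sup' univ_nonempty f + log (Fintype.card ι) / k := by
  set M := univ.sup' univ_nonempty f
  have hsum : ∑ i, exp (k * f i) ≤ Fintype.card ι * exp (k * M) :=
    calc ∑ i, exp (k * f i) ≤ ∑ _i : ι, exp (k * M) :=
          sum_le_sum fun i _ => by gcongr; exact le_sup' f (mem_univ i)
      _ = Fintype.card ι * exp (k * M) := by simp
  rw [one_div, inv_mul_eq_div, div_le_iff₀ hk, add_mul, div_mul_cancel₀ _ hk.ne',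
    log_le_iff_le_exp (by positivity), exp_add, exp_log (by positivity), mul_comm M]
  linarith

end LogSumExp

section StochasticAverage

variable {S : Type*} [Fintype S] [Nonempty S] {p : S → ℝ}

lemma inf'_le_sum_mul (hp0 : ∀ s, 0 ≤ p s) (hp1 : ∑ s, p s = 1) (x : S → ℝ) :
    univ.inf' univ_nonempty x ≤ ∑ s, p s * x s :=
  calc univ.inf' univ_nonempty x = ∑ s, p s * univ.inf' univ_nonempty x := by
        rw [← sum_mul, hp1, one_mul]
    _ ≤ ∑ s, p s * x s :=
        sum_le_sum fun s _ => mul_le_mul_of_nonneg_left (inf'_le x (mem_univ s)) (hp0 s)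

lemma sum_mul_le_sup' (hp0 : ∀ s, 0 ≤ p s) (hp1 : ∑ s, p s = 1) (x : S → ℝ) :
    ∑ s, p s * x s ≤ univ.sup' univ_nonempty x :=
  calc ∑ s, p s * x s ≤ ∑ s, p s * univ.sup' univ_nonempty x :=
        sum_le_sum fun s _ => mul_le_mul_of_nonneg_left (le_sup' x (mem_univ s)) (hp0 s)
    _ = univ.sup' univ_nonempty x := by rw [← sum_mul, hp1, one_mul]

end StochasticAverage

section Discounted

variable {S : Type*} [Fintype S] [Nonempty S] {x : S → ℝ} {γ : ℝ}

lemma nonneg_inf'_of_mul_inf'_le (hγ1 : γ < 1) (h : ∀ s, γ * univ.inf' univ_nonempty x ≤ x s) :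
    0 ≤ univ.inf' univ_nonempty x := by
  obtain ⟨s, -, hs⟩ := exists_mem_eq_inf' univ_nonempty x
  have := h s
  rw [← hs] at this
  nlinarith

lemma sup'_le_div_one_sub_of_le_mul_sup'_add {c : ℝ} (hγ1 : γ < 1)
    (h : ∀ s, x s ≤ γ * univ.sup' univ_nonempty x + c) :
    univ.sup' univ_nonempty x ≤ c / (1 - γ) := by
  obtain ⟨s, -, hs⟩ := exists_mem_eq_sup' univ_nonempty x
  have := h s
  rw [← hs] at this
  rw [le_div_iff₀ (sub_pos.2 hγ1)]
  linarith

end Discounted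

section QValue

variable {S A : Type*} [Fintype S] (P : S → A → S → ℝ) (r : S → ℝ) (γ : ℝ)

def qValue (V : S → ℝ) (s : S) (a : A) : ℝ :=
  ∑ s', P s a s' * (r s' + γ * V s')

lemma qValue_sub (V W : S → ℝ) (s : S) (a : A) :
    qValue P r γ V s a - qValue P r γ W s a = γ * ∑ s', P s a s' * (V - W) s' := by
  simp only [qValue, mul_sum, ← sum_sub_distrib, Pi.sub_apply]
  exact sum_congr rfl fun s' _ => by ring

variable [Nonempty S] [Fintype A] [Nonempty A] {P γ}

lemma sup'_qValue_le (hP0 : ∀ s a s', 0 ≤ P s a s') (hP1 : ∀ s a, ∑ s', P s a s' = 1)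
    (hγ0 : 0 ≤ γ) (V W : S → ℝ) (s : S) :
    univ.sup' univ_nonempty (qValue P r γ V s) ≤
      univ.sup' univ_nonempty (qValue P r γ W s) + γ * univ.sup' univ_nonempty (V - W) := by
  rw [sup'_add]
  refine sup'_mono_fun fun a _ => ?_
  have := mul_le_mul_of_nonneg_left (sum_mul_le_sup' (hP0 s a) (hP1 s a) (V - W)) hγ0
  linarith [qValue_sub P r γ V W s a]

lemma sup'_qValue_add_le (hP0 : ∀ s a s', 0 ≤ P s a s') (hP1 : ∀ s a, ∑ s', P s a s' = 1)
    (hγ0 : 0 ≤ γ) (V W : S → ℝ) (s : S) :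
    univ.sup' univ_nonempty (qValue P r γ W s) + γ * univ.inf' univ_nonempty (V - W) ≤
      univ.sup' univ_nonempty (qValue P r γ V s) := by
  rw [sup'_add]
  refine sup'_mono_fun fun a _ => ?_
  have := mul_le_mul_of_nonneg_left (inf'_le_sum_mul (hP0 s a) (hP1 s a) (V - W)) hγ0
  linarith [qValue_sub P r γ V W s a]

end QValue

theorem gsoft_fixed_point_gap {S A : Type*} [Fintype S] [Nonempty S]
    [Fintype A] [Nonempty A]
    (P : S → A → S → ℝ) (hP0 : ∀ s a s', 0 ≤ P s a s')
    (hP1 : ∀ s a, ∑ s', P s a s' = 1)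
    (r : S → ℝ) (γ : ℝ) (hγ0 : 0 ≤ γ) (hγ1 : γ < 1) (k : ℝ) (hk : 0 < k)
    (Vk Vstar : S → ℝ)
    (hVk : ∀ s, Vk s = (1 / k) * Real.log (∑ a : A,
      Real.exp (k * ∑ s', P s a s' * (r s' + γ * Vk s'))))
    (hVstar : ∀ s, Vstar s = Finset.univ.sup' Finset.univ_nonempty
      (fun a : A => ∑ s', P s a s' * (r s' + γ * Vstar s'))) :
    ∀ s, 0 ≤ Vk s - Vstar s ∧
      Vk s - Vstar s ≤ Real.log (Fintype.card A) / (k * (1 - γ)) := by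
  change ∀ s, Vk s = (1 / k) * log (∑ a, exp (k * qValue P r γ Vk s a)) at hVk
  change ∀ s, Vstar s = univ.sup' univ_nonempty (qValue P r γ Vstar s) at hVstar
  have hlower (s : S) : γ * univ.inf' univ_nonempty (Vk - Vstar) ≤ (Vk - Vstar) s := by
    have := sup'_qValue_add_le r hP0 hP1 hγ0 Vk Vstar s
    have := sup'_le_inv_mul_log_sum_exp (qValue P r γ Vk s) hk
    rw [Pi.sub_apply]
    linarith [hVk s, hVstar s]
  have hupper (s : S) : (Vk - Vstar) s ≤
      γ * univ.sup' univ_nonempty (Vk - Vstar) + log (Fintype.card A) / k := by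
    have := sup'_qValue_le r hP0 hP1 hγ0 Vk Vstar s
    have := inv_mul_log_sum_exp_le (qValue P r γ Vk s) hk
    rw [Pi.sub_apply]
    linarith [hVk s, hVstar s]
  have hmin := nonneg_inf'_of_mul_inf'_le hγ1 hlower
  have hmax := sup'_le_div_one_sub_of_le_mul_sup'_add hγ1 hupper
  rw [div_div] at hmax
  exact fun s => ⟨hmin.trans (inf'_le _ (mem_univ s)), (le_sup' _ (mem_univ s)).trans hmax⟩
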